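/- On the two-boundary space H_{2b}, the central element Y takes the quantized value Y_M on highest-weight vectors: for every M ∈ ℤ and every v ∈ H_{2b} satisfying E_tot v = 0 and K_tot v = q^{α_l+α_r+N−2M−2} v, one has ((q^{α_l+α_r+1} + q^{−α_l−α_r−1})·v − C v) / ((q^{α_l}−q^{−α_l})(q^{α_r}−q^{−α_r})) = Y_M · v, where Y_M := [M+1−N/2]_q [α_l+α_r−M+N/2]_q / ([α_l]_q [α_r]_q). -/

import Mathlib

noncomputable section

/-- Basis labels of `(ℂ²)^{⊗N}`: a state (0 = ↑, 1 = ↓) for each of the `N` sites. -/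
abbrev Conf (N : ℕ) := Fin N → Fin 2

/-- The two-boundary space `H_{2b} = V_{α_l} ⊗ (ℂ²)^{⊗N} ⊗ V_{α_r}`, realised as finitely
supported complex functions on its basis labels `(n, f, m)`. -/
abbrev H2b (N : ℕ) := (ℕ × Conf N × ℕ) →₀ ℂ

/-- The basis vector `|n⟩ ⊗ |f⟩ ⊗ |m⟩` of `H_{2b}`. -/
def ket2 {N : ℕ} (n : ℕ) (f : Conf N) (m : ℕ) : H2b N := Finsupp.single (n, f, m) 1

/-- The linear operator on `H_{2b}` determined by its values on the basis vectors. -/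
def bigOp {N : ℕ} (t : ℕ → Conf N → ℕ → H2b N) : Module.End ℂ (H2b N) :=
  Finsupp.lsum ℂ fun p => LinearMap.toSpanSingleton ℂ (H2b N) (t p.1 p.2.1 p.2.2)

/-- The q-deformed number `[x]_q` with `q = e^h`. -/
def qnum (h x : ℂ) : ℂ :=
  (Complex.exp (h * x) - Complex.exp (-(h * x))) / (Complex.exp h - Complex.exp (-h))

/-- Total `σᶻ`-weight of a spin configuration. -/
def zW {N : ℕ} (f : Conf N) : ℤ := ∑ j, (1 - 2 * ((f j : ℕ) : ℤ))

/-- `σᶻ`-weight of the part of a spin configuration strictly after site `j`. -/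
def zWgt {N : ℕ} (f : Conf N) (j : Fin N) : ℤ :=
  ∑ k ∈ Finset.univ.filter (fun k => j < k), (1 - 2 * ((f k : ℕ) : ℤ))

/-- `σᶻ`-weight of the part of a spin configuration strictly before site `j`. -/
def zWlt {N : ℕ} (f : Conf N) (j : Fin N) : ℤ :=
  ∑ k ∈ Finset.univ.filter (fun k => k < j), (1 - 2 * ((f k : ℕ) : ℤ))

/-- The iterated coproduct `E_tot = Σ_i Id^{⊗(i−1)} ⊗ E ⊗ K^{⊗(N+2−i)}` on `H_{2b}`. -/
def Etot (N : ℕ) (h αl αr : ℂ) : Module.End ℂ (H2b N) :=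
  bigOp fun n f m =>
    (if n = 0 then 0 else
      (qnum h (n : ℂ) * qnum h (αl - (n : ℂ)) *
        Complex.exp (h * ((zW f : ℂ) + (αr - 1 - 2 * (m : ℂ))))) • ket2 (n - 1) f m)
    + (∑ j : Fin N, if f j = 1 then
        Complex.exp (h * ((zWgt f j : ℂ) + (αr - 1 - 2 * (m : ℂ)))) •
          ket2 n (Function.update f j 0) m else 0)
    + (if m = 0 then 0 else
        (qnum h (m : ℂ) * qnum h (αr - (m : ℂ))) • ket2 n f (m - 1))

/-- The iterated coproduct `F_tot = Σ_i (K⁻¹)^{⊗(i−1)} ⊗ F ⊗ Id^{⊗(N+2−i)}` on `H_{2b}`. -/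
def Ftot (N : ℕ) (h αl αr : ℂ) : Module.End ℂ (H2b N) :=
  bigOp fun n f m =>
    ket2 (n + 1) f m
    + (∑ j : Fin N, if f j = 0 then
        Complex.exp (-(h * ((αl - 1 - 2 * (n : ℂ)) + (zWlt f j : ℂ)))) •
          ket2 n (Function.update f j 1) m else 0)
    + Complex.exp (-(h * ((αl - 1 - 2 * (n : ℂ)) + (zW f : ℂ)))) • ket2 n f (m + 1)

/-- The total Cartan generator `K_tot = K ⊗ ⋯ ⊗ K` on `H_{2b}`. -/
def Ktot (N : ℕ) (h αl αr : ℂ) : Module.End ℂ (H2b N) :=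
  bigOp fun n f m =>
    Complex.exp (h * ((αl - 1 - 2 * (n : ℂ)) + (zW f : ℂ) + (αr - 1 - 2 * (m : ℂ)))) •
      ket2 n f m

/-- The inverse total Cartan generator `K_tot⁻¹` on `H_{2b}`. -/
def KtotInv (N : ℕ) (h αl αr : ℂ) : Module.End ℂ (H2b N) :=
  bigOp fun n f m =>
    Complex.exp (-(h * ((αl - 1 - 2 * (n : ℂ)) + (zW f : ℂ) + (αr - 1 - 2 * (m : ℂ))))) •
      ket2 n f m

/-- The Casimir operator `C = (q−q⁻¹)² F_tot E_tot + q K_tot + q⁻¹ K_tot⁻¹` on `H_{2b}`. -/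
def Casimir2b (N : ℕ) (h αl αr : ℂ) : Module.End ℂ (H2b N) :=
  (Complex.exp h - Complex.exp (-h)) ^ 2 • (Ftot N h αl αr * Etot N h αl αr)
    + Complex.exp h • Ktot N h αl αr + Complex.exp (-h) • KtotInv N h αl αr

/-!
A highest-weight vector is annihilated by `E_tot`, so the term `F_tot E_tot` of the Casimir
drops out and `C v = (q k + q⁻¹ k⁻¹) v` where `K_tot v = k v`. With `k = q^{α_l+α_r+N−2M−2}` the
eigenvalue of `q^{α_l+α_r+1} + q^{−α_l−α_r−1} − C` is a difference of two "cosines", which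
factors as a product of two "sines", i.e. `(q − q⁻¹)² [M+1−N/2]_q [α_l+α_r−M+N/2]_q`.
-/

open Complex

lemma bigOp_ket2 {N : ℕ} (t : ℕ → Conf N → ℕ → H2b N) (n : ℕ) (f : Conf N) (m : ℕ) :
    bigOp t (ket2 n f m) = t n f m := by
  simp [bigOp, ket2]

lemma KtotInv_mul_Ktot (N : ℕ) (h αl αr : ℂ) : KtotInv N h αl αr * Ktot N h αl αr = 1 := by
  refine Finsupp.lhom_ext fun ⟨n, f, m⟩ b => ?_
  have hsingle : (Finsupp.single (n, f, m) b : H2b N) = b • ket2 n f m := by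
    simp [ket2]
  rw [hsingle, Module.End.mul_apply, map_smul, map_smul, Ktot, bigOp_ket2, map_smul, KtotInv,
    bigOp_ket2, smul_smul, smul_smul, mul_assoc, ← exp_add, add_neg_cancel, exp_zero, mul_one,
    Module.End.one_apply]

lemma Casimir2b_apply_of_highest_weight {N : ℕ} {h αl αr w : ℂ} {v : H2b N}
    (hE : Etot N h αl αr v = 0) (hK : Ktot N h αl αr v = exp (h * w) • v) :
    Casimir2b N h αl αr v = (exp (h * (w + 1)) + exp (-(h * (w + 1)))) • v := by
  have hKinv : KtotInv N h αl αr v = exp (-(h * w)) • v := by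
    calc KtotInv N h αl αr v
        = exp (-(h * w)) • KtotInv N h αl αr (Ktot N h αl αr v) := by
          rw [hK, map_smul, smul_smul, ← exp_add, neg_add_cancel, exp_zero, one_smul]
      _ = exp (-(h * w)) • v := by
          rw [← Module.End.mul_apply, KtotInv_mul_Ktot, Module.End.one_apply]
  simp only [Casimir2b, LinearMap.add_apply, LinearMap.smul_apply, Module.End.mul_apply, hE,
    map_zero, smul_zero, zero_add, hK, hKinv, smul_smul, ← add_smul, ← exp_add]
  congr 3 <;> ring

lemma exp_sub_exp_neg_ne_zero {h : ℂ} (hq : exp h ^ 2 ≠ 1) : exp h - exp (-h) ≠ 0 := by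
  intro heq
  apply hq
  rw [sq]
  nth_rewrite 2 [sub_eq_zero.mp heq]
  rw [← exp_add, add_neg_cancel, exp_zero]

lemma exp_sub_exp_neg_mul_exp_sub_exp_neg (h x y : ℂ) :
    (exp (h * x) - exp (-(h * x))) * (exp (h * y) - exp (-(h * y)))
      = exp (h * (x + y)) + exp (-(h * (x + y))) - (exp (h * (y - x)) + exp (-(h * (y - x)))) := by
  simp only [mul_add, mul_sub, exp_add, exp_sub, exp_neg]
  field_simp
  ring

lemma qnum_mul_qnum_div_qnum_mul_qnum {h : ℂ} (hq : exp h - exp (-h) ≠ 0) (x y a b : ℂ) :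
    qnum h x * qnum h y / (qnum h a * qnum h b)
      = (exp (h * x) - exp (-(h * x))) * (exp (h * y) - exp (-(h * y)))
          / ((exp (h * a) - exp (-(h * a))) * (exp (h * b) - exp (-(h * b)))) := by
  simp only [qnum, div_mul_div_comm]
  exact div_div_div_cancel_right₀ (mul_ne_zero hq hq) _ _

theorem Y_quantized_on_highest_weight_vectors_general (N : ℕ) (h αl αr : ℂ)
    (hq : Complex.exp h ^ 2 ≠ 1) :
    ∀ M : ℤ, ∀ v : H2b N,
      Etot N h αl αr v = 0 →
      Ktot N h αl αr v
        = Complex.exp (h * (αl + αr + (N : ℂ) - 2 * (M : ℂ) - 2)) • v →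
      ((Complex.exp (h * αl) - Complex.exp (-(h * αl))) *
          (Complex.exp (h * αr) - Complex.exp (-(h * αr))))⁻¹ •
          ((Complex.exp (h * (αl + αr + 1)) + Complex.exp (-(h * (αl + αr + 1)))) • v
            - Casimir2b N h αl αr v)
        = (qnum h ((M : ℂ) + 1 - (N : ℂ) / 2) * qnum h (αl + αr - (M : ℂ) + (N : ℂ) / 2) /
            (qnum h αl * qnum h αr)) • v := by
  intro M v hE hK
  have hsum : ((M : ℂ) + 1 - N / 2) + (αl + αr - M + N / 2) = αl + αr + 1 := by ring
  have hdiff : (αl + αr - M + N / 2) - ((M : ℂ) + 1 - N / 2)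
      = (αl + αr + N - 2 * M - 2) + 1 := by ring
  rw [Casimir2b_apply_of_highest_weight hE hK, ← sub_smul, smul_smul,
    qnum_mul_qnum_div_qnum_mul_qnum (exp_sub_exp_neg_ne_zero hq),
    exp_sub_exp_neg_mul_exp_sub_exp_neg h ((M : ℂ) + 1 - N / 2), hsum, hdiff, inv_mul_eq_div]

/-- On `H_{2b}`, the central element `Y` takes the quantized value `Y_M` on
highest-weight vectors of weight `q^{α_l+α_r+N−2M−2}`. -/
theorem Y_quantized_on_highest_weight_vectors (N : ℕ) (hN : 1 ≤ N) (h αl αr : ℂ)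
    (hq : Complex.exp h ^ 2 ≠ 1)
    (hαl : Complex.exp (h * αl) ≠ Complex.exp (-(h * αl)))
    (hαr : Complex.exp (h * αr) ≠ Complex.exp (-(h * αr))) :
    ∀ M : ℤ, ∀ v : H2b N,
      Etot N h αl αr v = 0 →
      Ktot N h αl αr v
        = Complex.exp (h * (αl + αr + (N : ℂ) - 2 * (M : ℂ) - 2)) • v →
      ((Complex.exp (h * αl) - Complex.exp (-(h * αl))) *
          (Complex.exp (h * αr) - Complex.exp (-(h * αr))))⁻¹ •
          ((Complex.exp (h * (αl + αr + 1)) + Complex.exp (-(h * (αl + αr + 1)))) • v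
            - Casimir2b N h αl αr v)
        = (qnum h ((M : ℂ) + 1 - (N : ℂ) / 2) * qnum h (αl + αr - (M : ℂ) + (N : ℂ) / 2) /
            (qnum h αl * qnum h αr)) • v :=
  Y_quantized_on_highest_weight_vectors_general N h αl αr hq
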